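/- arXiv:1611.04580 — 3 statements merged into one kernel-verified Lean document; each statement's English description precedes it below -/
import Mathlib

section
/- Let A be a finite alphabet, let C be an element of ℕ⟨A⟩ with constant term (C,1) = 0, and suppose there exist P, S ∈ ℕ⟨A⟩ such that C = P(A̲ − 1)S + 1, where A̲ is the sum of the letters of A. Then P and S are polynomials all of whose coefficients are 0 or 1. -/
open Polynomial

namespace CodesConj

/-- A (variable-length) code: a set of nonempty words such that every product of
codewords has a unique factorization into codewords. -/
def IsCode {A : Type*} (X : Set (FreeMonoid A)) : Prop :=
  (1 : FreeMonoid A) ∉ X ∧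
    ∀ l₁ l₂ : List (FreeMonoid A), (∀ w ∈ l₁, w ∈ X) → (∀ w ∈ l₂, w ∈ X) →
      l₁.prod = l₂.prod → l₁ = l₂

/-- A maximal code over the alphabet `A`. -/
def IsMaximalCode {A : Type*} (X : Set (FreeMonoid A)) : Prop :=
  IsCode X ∧ ∀ Y : Set (FreeMonoid A), IsCode Y → X ⊆ Y → X = Y

/-- The characteristic polynomial of a finite set of words, in `ℤ⟨A⟩`. -/
noncomputable def charPoly {A : Type*} (X : Finset (FreeMonoid A)) :
    MonoidAlgebra ℤ (FreeMonoid A) :=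
  ∑ w ∈ X, MonoidAlgebra.single w 1

/-- The sum of the letters of the alphabet, `A̲ ∈ ℤ⟨A⟩`. -/
noncomputable def alphaPoly (A : Type*) [Fintype A] : MonoidAlgebra ℤ (FreeMonoid A) :=
  ∑ a : A, MonoidAlgebra.single (FreeMonoid.of a) 1

/-- `a^H ∈ ℤ[a]` : the characteristic polynomial of a finite set of naturals. -/
noncomputable def expPoly (H : Finset ℕ) : Polynomial ℤ := ∑ h ∈ H, Polynomial.X ^ h

/-- `a^H ∈ ℕ[a]` : the characteristic polynomial of a finite set of naturals. -/
noncomputable def expPolyN (H : Finset ℕ) : Polynomial ℕ := ∑ h ∈ H, Polynomial.X ^ h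

/-- `(T, R)` is a factorization of `ℤ_n`: every `z ∈ {0, …, n−1}` has a unique
representation `z ≡ t + r (mod n)` with `t ∈ T`, `r ∈ R`. -/
def IsFactorizationMod (n : ℕ) (T R : Finset ℕ) : Prop :=
  ∀ z < n, ∃! p : ℕ × ℕ, p.1 ∈ T ∧ p.2 ∈ R ∧ (p.1 + p.2) % n = z

/-- Krasner factorization of order `n`: `a^I · a^J = 1 + a + ⋯ + a^{n−1}` in `ℕ[a]`. -/
def IsKrasner (n : ℕ) (I J : Finset ℕ) : Prop :=
  expPolyN I * expPolyN J = ∑ k ∈ Finset.range n, Polynomial.X ^ k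

/-- Krasner factorization of order `n`, unique-representation form: every
`z ∈ {0, …, n−1}` is uniquely `z = i + j`, `i ∈ I`, `j ∈ J`. -/
def IsKrasnerU (n : ℕ) (I J : Finset ℕ) : Prop :=
  ∀ z < n, ∃! p : ℕ × ℕ, p.1 ∈ I ∧ p.2 ∈ J ∧ p.1 + p.2 = z

/-- A chain of distinct positive divisors `k 0 = 1 ∣ k 1 ∣ ⋯ ∣ k s = n`. -/
def IsDivisorChain (k : ℕ → ℕ) (s n : ℕ) : Prop :=
  k 0 = 1 ∧ k s = n ∧ ∀ j, j < s → k j ∣ k (j + 1) ∧ k j < k (j + 1)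

/-- The set `{0, d, 2d, …, e − d}`, whose polynomial is `(a^e − 1)/(a^d − 1)` when `d ∣ e`. -/
def Dstep (d e : ℕ) : Finset ℕ := (Finset.range (e / d)).image fun i => i * d

/-- Sumset of two finite sets of naturals. -/
def sumOp (S T : Finset ℕ) : Finset ℕ := (S ×ˢ T).image fun p => p.1 + p.2

/-- The Hajós operation `S ∘ T`: the family of sets `{s + f s ∣ s ∈ S}` for an
arbitrary choice `f` of elements of `T`. -/
def circOp (S T : Finset ℕ) : Set (Finset ℕ) :=
  {U | ∃ f : ℕ → ℕ, (∀ s ∈ S, f s ∈ T) ∧ U = S.image fun s => s + f s}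

/-- The family of "R-sides" of Hajós factorizations for the chain `k`: starting from `{0}`,
combine with `D_j` by sumset for odd `j` and by `∘` for even `j`. -/
def hajosFamR (k : ℕ → ℕ) : ℕ → Set (Finset ℕ)
  | 0 => {({0} : Finset ℕ)}
  | j + 1 =>
    if Odd (j + 1) then
      {U | ∃ S ∈ hajosFamR k j, U = sumOp S (Dstep (k j) (k (j + 1)))}
    else
      {U | ∃ S ∈ hajosFamR k j, U ∈ circOp S (Dstep (k j) (k (j + 1)))}

/-- The family of "T-sides" of Hajós factorizations for the chain `k`: starting from `{0}`,
combine with `D_j` by `∘` for odd `j` and by sumset for even `j`. -/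
def hajosFamT (k : ℕ → ℕ) : ℕ → Set (Finset ℕ)
  | 0 => {({0} : Finset ℕ)}
  | j + 1 =>
    if Odd (j + 1) then
      {U | ∃ S ∈ hajosFamT k j, U ∈ circOp S (Dstep (k j) (k (j + 1)))}
    else
      {U | ∃ S ∈ hajosFamT k j, U = sumOp S (Dstep (k j) (k (j + 1)))}

/-- The set of residues modulo `n` of a finite set of naturals. -/
def residues (n : ℕ) (X : Finset ℕ) : Finset ℕ := X.image (· % n)

/-- `(R, T)` is a Hajós factorization of `ℤ_n` with respect to the chain `k` of length `s`. -/
def IsHajosWrt (n : ℕ) (k : ℕ → ℕ) (s : ℕ) (R T : Finset ℕ) : Prop :=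
  IsDivisorChain k s n ∧ residues n R ∈ hajosFamR k s ∧ residues n T ∈ hajosFamT k s

/-- `(R, T)` is a Hajós factorization of `ℤ_n`. -/
def IsHajos (n : ℕ) (R T : Finset ℕ) : Prop := ∃ k s, IsHajosWrt n k s R T

/-- The Krasner set `I` associated with a chain: the sumset of the `D_j`'s for even `j`. -/
def chainI (k : ℕ → ℕ) : ℕ → Finset ℕ
  | 0 => ({0} : Finset ℕ)
  | j + 1 => if Even (j + 1) then sumOp (chainI k j) (Dstep (k j) (k (j + 1))) else chainI k j

/-- The Krasner set `J` associated with a chain: the sumset of the `D_j`'s for odd `j`. -/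
def chainJ (k : ℕ → ℕ) : ℕ → Finset ℕ
  | 0 => ({0} : Finset ℕ)
  | j + 1 => if Odd (j + 1) then sumOp (chainJ k j) (Dstep (k j) (k (j + 1))) else chainJ k j

/-- `(I, J)` is a Krasner companion factorization of the Hajós factorization `(R, T)` of `ℤ_n`:
it arises from a common chain of divisors of `n` defining `(R, T)`. -/
def IsKrasnerCompanion (n : ℕ) (I J R T : Finset ℕ) : Prop :=
  ∃ k s, IsHajosWrt n k s R T ∧ I = chainI k s ∧ J = chainJ k s

/-- The recursive construction of good arrangements (with respect to the rows) of families
of `m` subsets of `ℕ`, as `m × ℓ` matrices: reduction mod `n`; base cases (one column of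
singletons, or the full rows `0, 1, …, n−1`); columnwise juxtaposition of the translates
`kh + D⁽¹⁾` in the sumset case; entrywise replacement `r ↦ r + λh` in the `∘` case. -/
inductive GoodRows (m : ℕ) : (n : ℕ) → (ℓ : ℕ) → (Fin m → Fin ℓ → ℕ) → Prop
  | mod (n ℓ : ℕ) (D : Fin m → Fin ℓ → ℕ) :
      GoodRows m n ℓ (fun p q => D p q % n) → GoodRows m n ℓ D
  | singleton (n : ℕ) (r : Fin m → ℕ) (h : ∀ p, r p < n) :
      GoodRows m n 1 fun p _ => r p
  | full (n : ℕ) : GoodRows m n n fun _ q => (q : ℕ)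
  | sumCase (h g ℓ₁ : ℕ) (hℓ : 0 < ℓ₁) (D1 : Fin m → Fin ℓ₁ → ℕ) :
      GoodRows m h ℓ₁ D1 →
      GoodRows m (g * h) (g * ℓ₁) fun p q =>
        ((q : ℕ) / ℓ₁) * h + D1 p ⟨(q : ℕ) % ℓ₁, Nat.mod_lt _ hℓ⟩
  | circCase (h g ℓ₁ : ℕ) (D1 lam : Fin m → Fin ℓ₁ → ℕ) (hlam : ∀ p q, lam p q < g) :
      GoodRows m h ℓ₁ D1 →
      GoodRows m (g * h) ℓ₁ fun p q => D1 p q + lam p q * h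

/-- The set of entries of the `p`-th row of a matrix. -/
def rowSet {m ℓ : ℕ} (D : Fin m → Fin ℓ → ℕ) (p : Fin m) : Finset ℕ :=
  Finset.image (D p) Finset.univ

/-- A subset `C₁` of `a^*ba^*` (encoded as a set of pairs of exponents) has a good
arrangement with `(I, J)` as a Krasner associated pair: there is a matrix arrangement
`(a^{r p q} b a^{v p q})` of `C₁` such that every row set and column set form a Hajós
factorization of `ℤ_n` having `(I, J)` as a Krasner companion factorization with respect
to a chain of divisors of `n`, the matrix of the `r`'s is a good arrangement with respect
to the rows, and the matrix of the `v`'s is a good arrangement with respect to the columns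
(i.e. its transpose is a good arrangement with respect to the rows). -/
def IsGoodArrangement (n : ℕ) (C1 : Set (ℕ × ℕ)) (I J : Finset ℕ) : Prop :=
  ∃ (m ℓ : ℕ) (r v : Fin m → Fin ℓ → ℕ),
    Function.Injective (fun pq : Fin m × Fin ℓ => (r pq.1 pq.2, v pq.1 pq.2)) ∧
    C1 = Set.range (fun pq : Fin m × Fin ℓ => (r pq.1 pq.2, v pq.1 pq.2)) ∧
    (∀ (p : Fin m) (q : Fin ℓ),
      IsKrasnerCompanion n I J (rowSet r p) (rowSet (fun q' p' => v p' q') q)) ∧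
    GoodRows m n ℓ r ∧
    GoodRows ℓ n m (fun q p => v p q)

/-- `X^*`: the submonoid generated by `X`. -/
def starSet {A : Type*} (X : Set (FreeMonoid A)) : Set (FreeMonoid A) :=
  ↑(Submonoid.closure X)

/-- The word `a^i b a^j`. -/
def abaWord {A : Type*} (a b : A) (i j : ℕ) : FreeMonoid A :=
  FreeMonoid.of a ^ i * FreeMonoid.of b * FreeMonoid.of a ^ j

/-- The word `a^i w a^j`. -/
def awaWord {A : Type*} (a : A) (w : FreeMonoid A) (i j : ℕ) : FreeMonoid A :=
  FreeMonoid.of a ^ i * w * FreeMonoid.of a ^ j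

/-- `w ∈ B(a^*B)^*` where `B = A \ {a}`: `w` is a nonempty word whose first and last
letters are different from `a`. -/
def InBStar {A : Type*} (a : A) (w : FreeMonoid A) : Prop :=
  w ≠ 1 ∧ w.toList.head? ≠ some a ∧ w.toList.getLast? ≠ some a

/-- `|X|`: the maximal length of a word of `X`. -/
def maxLen {A : Type*} (X : Finset (FreeMonoid A)) : ℕ := X.sup fun w => w.toList.length

/-- `w` is strongly right completable for `X`. -/
def StronglyRightCompletable {A : Type*} (X : Set (FreeMonoid A)) (w : FreeMonoid A) : Prop :=
  ∀ u : FreeMonoid A, ∃ v : FreeMonoid A, w * u * v ∈ starSet X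

/-- `a^P` is a left set of `X` (with `n` the order of `a`). -/
def IsLeftSet {A : Type*} (X : Finset (FreeMonoid A)) (a : A) (n : ℕ) (P : Finset ℕ) : Prop :=
  ∃ y : FreeMonoid A, StronglyRightCompletable (↑X) y ∧
    ∀ i : ℕ, i ∈ P ↔ i < n ∧ y * FreeMonoid.of a ^ (2 * n * maxLen X + i) ∈ starSet (↑X)

/-- `a^Q` is a right set of `X` (with `n` the order of `a`). -/
def IsRightSet {A : Type*} (X : Finset (FreeMonoid A)) (a : A) (n : ℕ) (Q : Finset ℕ) : Prop :=
  (∃ x : FreeMonoid A, ∀ k : ℕ,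
      k ∈ Q ↔ k < n ∧ ∃ u, FreeMonoid.of a ^ (k + 2 * n * maxLen X) * x * u ∈ starSet (↑X)) ∧
    ∀ i ∈ Q, ∀ j ∈ Q, i < j →
      ¬∃ u ∈ starSet (↑X : Set (FreeMonoid A)), u * FreeMonoid.of a ^ (j - i) ∈ starSet (↑X)

/-- The set `X_w = (a^* w a^* ∩ X^*) \ [aⁿ(a^* w a^* ∩ X^*) ∩ (a^* w a^* ∩ X^*)aⁿ]`. -/
def XwSet {A : Type*} (X : Finset (FreeMonoid A)) (a : A) (n : ℕ) (w : FreeMonoid A) :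
    Set (FreeMonoid A) :=
  {u | ((∃ i j, u = awaWord a w i j) ∧ u ∈ starSet (↑X)) ∧
    ¬((∃ v, ((∃ i j, v = awaWord a w i j) ∧ v ∈ starSet (↑X)) ∧
        u = FreeMonoid.of a ^ n * v) ∧
      (∃ v, ((∃ i j, v = awaWord a w i j) ∧ v ∈ starSet (↑X)) ∧
        u = v * FreeMonoid.of a ^ n))}

/-- The set of pairs of exponents `(i, j)` with `a^i w a^j ∈ X_w`. -/
def XwPairs {A : Type*} (X : Finset (FreeMonoid A)) (a : A) (n : ℕ) (w : FreeMonoid A) :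
    Set (ℕ × ℕ) :=
  {pr | awaWord a w pr.1 pr.2 ∈ XwSet X a n w}

/-- A positively factorizing code: a finite maximal code `C` with
`C̲ − 1 = P̲ (A̲ − 1) S̲` for finite sets of words `P, S`. -/
def IsPositivelyFactorizing {A : Type*} [Fintype A] (C : Finset (FreeMonoid A)) : Prop :=
  IsMaximalCode (↑C : Set (FreeMonoid A)) ∧
    ∃ P S : Finset (FreeMonoid A),
      charPoly C - 1 = charPoly P * (alphaPoly A - 1) * charPoly S

/-! From `P (1 - A̲) S = 1 - C` the constant terms give `P₁ S₁ = 1`, so `P₁ = S₁ = 1`.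
Then `P`, `1 - C` and `1 - A̲` are invertible power series and `A^* = (1 - A̲)⁻¹ = S C^* P`.
Modulo the two-sided ideal of polynomials supported on words longer than `w`, all three
inverses are truncated geometric series, so this becomes an identity of polynomials.
As `S`, `C^*`, `P` have nonnegative coefficients and constant term `1`,
`(S, w) ≤ (S C^* P, w) = (A^*, w) = 1`, and likewise `(P, w) ≤ 1`. -/

section NonnegCoeffs

variable (R M : Type*) [Semiring R] [PartialOrder R] [IsOrderedRing R] [Monoid M]

def nonnegCoeffs : Subsemiring (MonoidAlgebra R M) where
  carrier := {f | ∀ m, 0 ≤ f.coeff m}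
  mul_mem' {f g} hf hg m := by
    classical
    rw [MonoidAlgebra.coeff_mul]
    exact Finset.sum_nonneg fun a _ => Finset.sum_nonneg fun b _ => by
      beta_reduce
      split_ifs
      exacts [mul_nonneg (hf a) (hg b), le_rfl]
  one_mem' m := by
    classical
    rw [MonoidAlgebra.one_def, MonoidAlgebra.coeff_single, Finsupp.single_apply]
    split_ifs
    exacts [zero_le_one, le_rfl]
  add_mem' hf hg m := add_nonneg (hf m) (hg m)
  zero_mem' _ := le_rfl

variable {R M}

lemma coeff_mul_coeff_le_coeff_mul {f g : MonoidAlgebra R M} (hf : f ∈ nonnegCoeffs R M)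
    (hg : g ∈ nonnegCoeffs R M) (u v : M) : f.coeff u * g.coeff v ≤ (f * g).coeff (u * v) := by
  classical
  have hfg : 0 ≤ (f * g).coeff (u * v) := (nonnegCoeffs R M).mul_mem hf hg (u * v)
  by_cases hu : f.coeff u = 0
  · rwa [hu, zero_mul]
  by_cases hv : g.coeff v = 0
  · rwa [hv, mul_zero]
  have hterm : ∀ a b, 0 ≤ if a * b = u * v then f.coeff a * g.coeff b else 0 := fun a b => by
    split_ifs
    exacts [mul_nonneg (hf a) (hg b), le_rfl]
  rw [MonoidAlgebra.coeff_mul]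
  calc f.coeff u * g.coeff v = if u * v = u * v then f.coeff u * g.coeff v else 0 := by
        rw [if_pos rfl]
    _ ≤ ∑ b ∈ g.coeff.support, if u * b = u * v then f.coeff u * g.coeff b else 0 :=
        Finset.single_le_sum (fun b _ => hterm u b) (Finsupp.mem_support_iff.2 hv)
    _ ≤ _ := Finset.single_le_sum (fun a _ => Finset.sum_nonneg fun b _ => hterm a b)
        (Finsupp.mem_support_iff.2 hu)

end NonnegCoeffs

section FreeMonoidAlgebra

variable {R A : Type*} [Semiring R]

def constCoeff : MonoidAlgebra R (FreeMonoid A) →+* R where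
  toFun f := f.coeff 1
  map_one' := MonoidAlgebra.coeff_one_one
  map_mul' f g := by
    rw [MonoidAlgebra.coeff_mul_antidiag f g 1 {(1, 1)} fun {p} => by simp [Prod.ext_iff],
      Finset.sum_singleton]
  map_zero' := rfl
  map_add' _ _ := rfl

lemma constCoeff_apply (f : MonoidAlgebra R (FreeMonoid A)) : constCoeff f = f.coeff 1 := rfl

lemma coeff_mul_eq_zero_of_length_lt {f g : MonoidAlgebra R (FreeMonoid A)} {k m : ℕ}
    (hf : ∀ w : FreeMonoid A, w.length < k → f.coeff w = 0)
    (hg : ∀ w : FreeMonoid A, w.length < m → g.coeff w = 0)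
    {w : FreeMonoid A} (hw : w.length < k + m) : (f * g).coeff w = 0 := by
  classical
  rw [MonoidAlgebra.coeff_mul]
  refine Finset.sum_eq_zero fun u _ => Finset.sum_eq_zero fun v _ => ?_
  beta_reduce
  split_ifs with huv
  · rw [← huv, FreeMonoid.length_mul] at hw
    rcases lt_or_ge u.length k with hu | hu
    · rw [hf u hu, zero_mul]
    · rw [hg v (by omega), mul_zero]
  · rfl

end FreeMonoidAlgebra

section LengthIdeal

variable {R A : Type*} [Ring R]

variable (R A) in
noncomputable def lengthIdeal (k : ℕ) : TwoSidedIdeal (MonoidAlgebra R (FreeMonoid A)) :=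
  .mk' {f | ∀ w : FreeMonoid A, w.length < k → f.coeff w = 0}
    (fun _ _ => rfl)
    (fun hf hg w hw => by
      rw [MonoidAlgebra.coeff_add, Finsupp.add_apply, hf w hw, hg w hw, add_zero])
    (fun hf w hw => by rw [MonoidAlgebra.coeff_neg, Finsupp.neg_apply, hf w hw, neg_zero])
    (fun hg _ hw => coeff_mul_eq_zero_of_length_lt (k := 0)
      (fun _ h => absurd h (Nat.not_lt_zero _)) hg (by omega))
    (fun hf _ hw => coeff_mul_eq_zero_of_length_lt (m := 0) hf
      (fun _ h => absurd h (Nat.not_lt_zero _)) (by omega))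

lemma mem_lengthIdeal {k : ℕ} {f : MonoidAlgebra R (FreeMonoid A)} :
    f ∈ lengthIdeal R A k ↔ ∀ w : FreeMonoid A, w.length < k → f.coeff w = 0 :=
  TwoSidedIdeal.mem_mk' ..

lemma mem_lengthIdeal_one {f : MonoidAlgebra R (FreeMonoid A)} :
    f ∈ lengthIdeal R A 1 ↔ constCoeff f = 0 := by
  simp [mem_lengthIdeal, constCoeff_apply]

lemma mul_mem_lengthIdeal {k m : ℕ} {f g : MonoidAlgebra R (FreeMonoid A)}
    (hf : f ∈ lengthIdeal R A k) (hg : g ∈ lengthIdeal R A m) :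
    f * g ∈ lengthIdeal R A (k + m) :=
  mem_lengthIdeal.2 fun _ hw =>
    coeff_mul_eq_zero_of_length_lt (mem_lengthIdeal.1 hf) (mem_lengthIdeal.1 hg) hw

lemma pow_mem_lengthIdeal {f : MonoidAlgebra R (FreeMonoid A)} (hf : f ∈ lengthIdeal R A 1) :
    ∀ n : ℕ, f ^ n ∈ lengthIdeal R A n
  | 0 => mem_lengthIdeal.2 fun _ h => absurd h (Nat.not_lt_zero _)
  | n + 1 => by rw [pow_succ]; exact mul_mem_lengthIdeal (pow_mem_lengthIdeal hf n) hf

end LengthIdeal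

section TwoSidedQuotient

variable {R : Type*} [Ring R] (I : TwoSidedIdeal R)

lemma mk'_eq_zero_iff {x : R} : I.ringCon.mk' x = 0 ↔ x ∈ I := by
  rw [← TwoSidedIdeal.mem_ker, TwoSidedIdeal.ker_ringCon_mk']

lemma mk'_geom_sum_mul_one_sub {x : R} {n : ℕ} (hx : x ^ n ∈ I) :
    I.ringCon.mk' (∑ i ∈ Finset.range n, x ^ i) * I.ringCon.mk' (1 - x) = 1 := by
  rw [← map_mul, geom_sum_mul_neg, map_sub, (mk'_eq_zero_iff I).2 hx, map_one, sub_zero]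

lemma mk'_one_sub_mul_geom_sum {x : R} {n : ℕ} (hx : x ^ n ∈ I) :
    I.ringCon.mk' (1 - x) * I.ringCon.mk' (∑ i ∈ Finset.range n, x ^ i) = 1 := by
  rw [← map_mul, mul_neg_geom_sum, map_sub, (mk'_eq_zero_iff I).2 hx, map_one, sub_zero]

end TwoSidedQuotient

lemma mul_mul_eq_of_mul_mul_mul_eq_one {M : Type*} [Monoid M] {p d s t g : M} (hp : IsUnit p)
    (hg : g * d = 1) (h : p * d * s * t = 1) : s * t * p = g := by
  have hdstp : d * s * t * p = 1 :=
    hp.mul_left_cancel (by rw [mul_one, ← mul_assoc, ← mul_assoc, ← mul_assoc, h, one_mul])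
  calc s * t * p = g * d * (s * t * p) := by rw [hg, one_mul]
    _ = g * (d * s * t * p) := by simp only [mul_assoc]
    _ = g := by rw [hdstp, mul_one]

section AlphaPoly

variable {A : Type*} [Fintype A]

lemma coeff_alphaPoly_mul_one (f : MonoidAlgebra ℤ (FreeMonoid A)) :
    (alphaPoly A * f).coeff 1 = 0 := by
  rw [alphaPoly, Finset.sum_mul, MonoidAlgebra.coeff_sum, Finsupp.finsetSum_apply]
  refine Finset.sum_eq_zero fun a _ =>
    MonoidAlgebra.coeff_single_mul_of_forall_mul_ne _ _ fun t h => ?_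
  simpa using congrArg FreeMonoid.length h

lemma coeff_alphaPoly_mul_of_mul (f : MonoidAlgebra ℤ (FreeMonoid A)) (b : A) (t : FreeMonoid A) :
    (alphaPoly A * f).coeff (FreeMonoid.of b * t) = f.coeff t := by
  classical
  rw [alphaPoly, Finset.sum_mul, MonoidAlgebra.coeff_sum, Finsupp.finsetSum_apply,
    Finset.sum_eq_single_of_mem b (Finset.mem_univ b), MonoidAlgebra.coeff_single_mul_mul, one_mul]
  refine fun a _ hab => MonoidAlgebra.coeff_single_mul_of_forall_mul_ne _ _ fun u h => hab ?_
  simpa using congrArg List.head? (congrArg FreeMonoid.toList h)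

lemma constCoeff_alphaPoly : constCoeff (alphaPoly A) = 0 := by
  simpa [constCoeff_apply] using coeff_alphaPoly_mul_one (1 : MonoidAlgebra ℤ (FreeMonoid A))

lemma coeff_alphaPoly_pow (n : ℕ) (w : FreeMonoid A) :
    (alphaPoly A ^ n).coeff w = if w.length = n then 1 else 0 := by
  induction n generalizing w with
  | zero =>
    classical
    simp [MonoidAlgebra.one_def, MonoidAlgebra.coeff_single, Finsupp.single_apply, eq_comm]
  | succ n ih =>
    induction w using FreeMonoid.casesOn with
    | one => simp [pow_succ', coeff_alphaPoly_mul_one]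
    | of_mul b t => simp [pow_succ', coeff_alphaPoly_mul_of_mul, ih, add_comm 1]

lemma coeff_geom_sum_alphaPoly {k : ℕ} {w : FreeMonoid A} (hw : w.length < k) :
    (∑ n ∈ Finset.range k, alphaPoly A ^ n).coeff w = 1 := by
  simp [MonoidAlgebra.coeff_sum, coeff_alphaPoly_pow, hw]

end AlphaPoly

section Factorization

variable {A : Type*} [Fintype A] {C P S : MonoidAlgebra ℤ (FreeMonoid A)}

lemma coeff_mul_geom_sum_mul (hC : constCoeff C = 0) (hP : constCoeff P = 1)
    (h : P * (1 - alphaPoly A) * S = 1 - C) {k : ℕ} {w : FreeMonoid A} (hw : w.length < k) :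
    (S * (∑ n ∈ Finset.range k, C ^ n) * P).coeff w = 1 := by
  set T := ∑ n ∈ Finset.range k, C ^ n
  set G := ∑ n ∈ Finset.range k, alphaPoly A ^ n
  set I := lengthIdeal ℤ A k
  set π := I.ringCon.mk'
  have hG : π G * π (1 - alphaPoly A) = 1 := mk'_geom_sum_mul_one_sub I
    (pow_mem_lengthIdeal (mem_lengthIdeal_one.2 constCoeff_alphaPoly) k)
  have hT : π (1 - C) * π T = 1 :=
    mk'_one_sub_mul_geom_sum I (pow_mem_lengthIdeal (mem_lengthIdeal_one.2 hC) k)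
  have hPunit : IsUnit (π P) := by
    have hnil : IsNilpotent (π (1 - P)) :=
      ⟨k, by
        rw [← map_pow, mk'_eq_zero_iff]
        exact pow_mem_lengthIdeal (mem_lengthIdeal_one.2 (by simp [hP])) k⟩
    simpa using hnil.isUnit_one_sub
  have hmod : π (S * T * P) = π G := by
    rw [map_mul, map_mul]
    refine mul_mul_eq_of_mul_mul_mul_eq_one hPunit hG ?_
    rw [← map_mul, ← map_mul, h, hT]
  have hdiff : S * T * P - G ∈ I := by rw [← mk'_eq_zero_iff, map_sub, hmod, sub_self]
  have hw' := mem_lengthIdeal.1 hdiff w hw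
  rwa [MonoidAlgebra.coeff_sub, Finsupp.sub_apply, coeff_geom_sum_alphaPoly hw, sub_eq_zero] at hw'

lemma coeff_le_one_of_mul_one_sub_alphaPoly_mul (hCnn : C ∈ nonnegCoeffs ℤ (FreeMonoid A))
    (hPnn : P ∈ nonnegCoeffs ℤ (FreeMonoid A)) (hSnn : S ∈ nonnegCoeffs ℤ (FreeMonoid A))
    (hC : constCoeff C = 0) (hP : constCoeff P = 1) (hS : constCoeff S = 1)
    (h : P * (1 - alphaPoly A) * S = 1 - C) (w : FreeMonoid A) :
    P.coeff w ≤ 1 ∧ S.coeff w ≤ 1 := by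
  set T := ∑ n ∈ Finset.range (w.length + 1), C ^ n
  have hTnn : T ∈ nonnegCoeffs ℤ (FreeMonoid A) :=
    Subsemiring.sum_mem _ fun n _ => pow_mem hCnn n
  have hT : constCoeff T = 1 := by simp [T, Finset.sum_range_succ', hC]
  have hSTP : (S * T * P).coeff w = 1 := coeff_mul_geom_sum_mul hC hP h (Nat.lt_succ_self _)
  constructor
  · calc P.coeff w = (S * T).coeff 1 * P.coeff w := by
          rw [← constCoeff_apply, map_mul, hS, hT, one_mul, one_mul]
      _ ≤ (S * T * P).coeff (1 * w) := coeff_mul_coeff_le_coeff_mul (mul_mem hSnn hTnn) hPnn 1 w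
      _ = 1 := by rw [one_mul, hSTP]
  · calc S.coeff w = S.coeff w * (T * P).coeff 1 := by
          rw [← constCoeff_apply, map_mul, hP, hT, mul_one, mul_one]
      _ ≤ (S * (T * P)).coeff (w * 1) := coeff_mul_coeff_le_coeff_mul hSnn (mul_mem hTnn hPnn) w 1
      _ = 1 := by rw [mul_one, ← mul_assoc, hSTP]

end Factorization

/-- Reutenauer. If `C ∈ ℕ⟨A⟩` has constant term 0 and
`C = P(A̲ − 1)S + 1` with `P, S ∈ ℕ⟨A⟩`, then `P` and `S` have coefficients 0, 1. -/
theorem statement1 {A : Type*} [Fintype A] (C : MonoidAlgebra ℤ (FreeMonoid A))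
    (hpos : ∀ w : FreeMonoid A, 0 ≤ C.coeff w) (h1 : C.coeff (1 : FreeMonoid A) = 0)
    (P S : MonoidAlgebra ℤ (FreeMonoid A))
    (hP : ∀ w : FreeMonoid A, 0 ≤ P.coeff w) (hS : ∀ w : FreeMonoid A, 0 ≤ S.coeff w)
    (h : C = P * (alphaPoly A - 1) * S + 1) :
    (∀ w : FreeMonoid A, P.coeff w = 0 ∨ P.coeff w = 1) ∧
      (∀ w : FreeMonoid A, S.coeff w = 0 ∨ S.coeff w = 1) := by
  have hfac : P * (1 - alphaPoly A) * S = 1 - C := by rw [h]; noncomm_ring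
  have hPS : constCoeff P * constCoeff S = 1 := by
    simpa [constCoeff_alphaPoly, show constCoeff C = 0 from h1] using congrArg constCoeff hfac
  have hle := coeff_le_one_of_mul_one_sub_alphaPoly_mul hpos hP hS h1
    (Int.eq_one_of_mul_eq_one_right (hP 1) hPS) (Int.eq_one_of_mul_eq_one_left (hS 1) hPS) hfac
  exact ⟨fun w => by have := hP w; have := (hle w).1; omega,
    fun w => by have := hS w; have := (hle w).2; omega⟩

end CodesConj
end

section
/- Let (I,J) be a Krasner factorization of order n. Let R, R', M be finite subsets of ℕ such that a^R = a^I(1 + a^M(a−1)) and a^{R'} = a^{R_{(n)}}, where R_{(n)} is the set of residues modulo n of the elements of R. Then there exists a finite subset M' of ℕ such that a^{R'} = a^I(1 + a^{M'}(a−1)) and I + max(M') + 1 ⊆ {0,…,n−1}. Furthermore, writing R' = {r_1,…,r_q} and R = {r_1 + λ_1 n, …, r_q + λ_q n} with λ_1,…,λ_q ≥ 0, and setting a^H = a^{r_1 + {0, n, …, (λ_1 − 1)n}} + ⋯ + a^{r_q + {0, n, …, (λ_q − 1)n}}, one has a disjoint union M = M' ∪ M'' with M'' ⊆ ℕ, a^{M''}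 = a^J · a^H, and a^R = a^{R'} + a^I(a−1)a^{M''}. -/
open Polynomial

namespace CodesConj

/-!
Since `a^n - 1 = a^I a^J (a - 1)` and `a^{r + λn} - a^r = (a^n - 1) Σ_{u<λ} a^{r+un}`, one has
`a^R = a^{R'} + a^I (a - 1) Q` with `Q = a^J a^H`; hence `a^{R'} = a^I (1 + P (a - 1))` with
`P = a^M - Q`, and `M` splits as `M' ∪ M''` with `a^{M'} = P`, `a^{M''} = Q` as soon as `P` and
`Q` have nonnegative coefficients. For `Q` this is clear. For `P`, multiplying
`a^S = a^I (1 + A (a - 1))` by `a^J` gives `a^J a^S = 1 + ⋯ + a^{n-1} + (a^n - 1) A`, so `1 - A_k`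
counts the pairs `(j, s) ∈ J × S` with `j + s ≤ k` and `j + s ≡ k (mod n)`. For `S = R`,
`A = a^M` has coefficients `≤ 1`, so the sums `J + R` are distinct modulo `n`; this survives
reducing `R` modulo `n`, so the counts for `S = R'` are at most `1`, i.e. `P ≥ 0`. The bound on
`I + M'` is a degree count in `a^{R'} - a^I = a^I P (a - 1)`, all of whose exponents are `< n`.
-/

open Finset

lemma coeff_expPoly (H : Finset ℕ) (k : ℕ) :
    (expPoly H).coeff k = if k ∈ H then 1 else 0 := by
  simp [expPoly, finsetSum_coeff, coeff_X_pow]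

lemma coeff_expPoly_nonneg (H : Finset ℕ) (k : ℕ) : 0 ≤ (expPoly H).coeff k := by
  rw [coeff_expPoly]; split_ifs <;> norm_num

lemma expPoly_eq_map (H : Finset ℕ) : expPoly H = (expPolyN H).map (Nat.castRingHom ℤ) := by
  simp [expPoly, expPolyN, Polynomial.map_sum]

lemma expPoly_image {ι : Type*} {s : Finset ι} {f : ι → ℕ} (hf : Set.InjOn f s) :
    expPoly (s.image f) = ∑ i ∈ s, X ^ f i :=
  sum_image hf

lemma natDegree_expPoly_le {H : Finset ℕ} {n : ℕ} (hH : ∀ h ∈ H, h < n) :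
    (expPoly H).natDegree ≤ n - 1 := by
  refine natDegree_le_iff_coeff_eq_zero.2 fun N hN => ?_
  rw [coeff_expPoly, if_neg fun hN' => by have := hH N hN'; omega]

lemma X_pow_add_mul_sub_X_pow {R : Type*} [CommRing R] (r l n : ℕ) :
    (X : R[X]) ^ (r + l * n) - X ^ r = (X ^ n - 1) * ∑ u ∈ range l, X ^ (r + u * n) := by
  have hpow (u : ℕ) : (X : R[X]) ^ (r + u * n) = X ^ r * (X ^ n) ^ u := by
    rw [pow_add, ← pow_mul, mul_comm u]
  simp only [hpow, ← mul_sum]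
  linear_combination -X ^ r * geom_sum_mul ((X : R[X]) ^ n) l

lemma mod_lt_of_mem_residues {n x : ℕ} {S : Finset ℕ} (hn : 0 < n) (hx : x ∈ residues n S) :
    x < n := by
  obtain ⟨y, -, rfl⟩ := mem_image.1 hx
  exact Nat.mod_lt y hn

lemma expPoly_image_add_mul_eq {ι : Type*} {s : Finset ι} {n : ℕ} {r : ι → ℕ} (lam : ι → ℕ)
    (hr : Set.InjOn r s) (hrn : ∀ i ∈ s, r i < n) :
    expPoly (s.image fun i => r i + lam i * n) =
      expPoly (s.image r) + (X ^ n - 1) * ∑ i ∈ s, ∑ u ∈ range (lam i), X ^ (r i + u * n) := by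
  have hlift : Set.InjOn (fun i => r i + lam i * n) s := fun i hi j hj hij => hr hi hj <| by
    simpa [Nat.add_mul_mod_self_right, Nat.mod_eq_of_lt (hrn _ hi), Nat.mod_eq_of_lt (hrn _ hj)]
      using congrArg (· % n) hij
  rw [expPoly_image hlift, expPoly_image hr, ← sub_eq_iff_eq_add', ← sum_sub_distrib, mul_sum]
  exact sum_congr rfl fun i _ => X_pow_add_mul_sub_X_pow _ _ _

def sumCount (J S : Finset ℕ) (k : ℕ) : ℕ := #{p ∈ J ×ˢ S | p.1 + p.2 = k}

lemma coeff_expPoly_mul (J S : Finset ℕ) (k : ℕ) :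
    (expPoly J * expPoly S).coeff k = sumCount J S k := by
  simp only [expPoly, sum_mul_sum, ← pow_add, ← sum_product', finsetSum_coeff, coeff_X_pow,
    sum_boole, sumCount, eq_comm]

namespace IsKrasner

variable {n : ℕ} {I J : Finset ℕ}

lemma expPoly_mul (hK : IsKrasner n I J) : expPoly I * expPoly J = expPoly (range n) := by
  rw [expPoly_eq_map, expPoly_eq_map, expPoly_eq_map, ← Polynomial.map_mul]
  exact congrArg _ hK

lemma X_pow_sub_one (hK : IsKrasner n I J) :
    (X : ℤ[X]) ^ n - 1 = expPoly I * expPoly J * (X - 1) := by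
  rw [hK.expPoly_mul, expPoly, geom_sum_mul]

lemma sumCount_eq (hK : IsKrasner n I J) (k : ℕ) :
    sumCount I J k = if k < n then 1 else 0 := by
  have h := coeff_expPoly_mul I J k
  simp only [hK.expPoly_mul, coeff_expPoly, mem_range] at h
  split_ifs at h ⊢ <;> omega

lemma zero_mem_right (hK : IsKrasner n I J) (hn : 0 < n) : 0 ∈ J := by
  have h := hK.sumCount_eq 0
  rw [if_pos hn, sumCount, card_eq_one] at h
  obtain ⟨⟨i, j⟩, hp⟩ := h
  obtain ⟨hij, hsum⟩ := mem_filter.1 (hp ▸ mem_singleton_self _)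
  obtain rfl : j = 0 := by omega
  exact (mem_product.1 hij).2

lemma lt_of_mem_left (hK : IsKrasner n I J) (hn : 0 < n) {i : ℕ} (hi : i ∈ I) : i < n := by
  have h := hK.sumCount_eq i
  have hpos : 0 < sumCount I J i :=
    card_pos.2 ⟨(i, 0), mem_filter.2 ⟨mem_product.2 ⟨hi, hK.zero_mem_right hn⟩, add_zero i⟩⟩
  split_ifs at h with hlt
  · exact hlt
  · omega

lemma expPoly_mul_eq (hK : IsKrasner n I J) {S : Finset ℕ} {A : ℤ[X]}
    (h : expPoly S = expPoly I * (1 + A * (X - 1))) :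
    expPoly J * expPoly S = expPoly (range n) + (X ^ n - 1) * A := by
  rw [h, hK.X_pow_sub_one, ← hK.expPoly_mul]
  ring

end IsKrasner

def modCount (n : ℕ) (J S : Finset ℕ) (k : ℕ) : ℕ :=
  #{p ∈ J ×ˢ S | p.1 + p.2 ≤ k ∧ p.1 + p.2 ≡ k [MOD n]}

section modCount

variable {n : ℕ} {J S : Finset ℕ}

lemma modCount_eq (hn : 0 < n) (k : ℕ) :
    modCount n J S k = sumCount J S k + if n ≤ k then modCount n J S (k - n) else 0 := by
  have key (m : ℕ) : (m ≤ k ∧ m ≡ k [MOD n]) ↔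
      m = k ∨ (n ≤ k ∧ m ≤ k - n ∧ m ≡ k - n [MOD n]) := by
    have hshift (hnk : n ≤ k) : k - n ≡ k [MOD n] := by
      conv_rhs => rw [← Nat.sub_add_cancel hnk]
      exact Nat.add_modEq_right.symm
    constructor
    · rintro ⟨hle, hmod⟩
      rcases hle.lt_or_eq with hlt | rfl
      · have := Nat.le_of_dvd (by omega) ((Nat.modEq_iff_dvd' hle).1 hmod)
        exact Or.inr ⟨by omega, by omega, hmod.trans (hshift (by omega)).symm⟩
      · exact Or.inl rfl
    · rintro (rfl | ⟨hnk, hle, hmod⟩)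
      · exact ⟨le_rfl, Nat.ModEq.refl _⟩
      · exact ⟨by omega, hmod.trans (hshift hnk)⟩
  rw [modCount, filter_congr fun p _ => key _, filter_or,
    card_union_of_disjoint (disjoint_filter.2 fun p _ h₁ h₂ => by omega)]
  split_ifs with hnk
  · simp only [hnk, true_and, sumCount, modCount]
  · simp [hnk, sumCount]

lemma modCount_eq_one_sub_coeff (hn : 0 < n) {F : ℤ[X]}
    (h : expPoly J * expPoly S = expPoly (range n) + (X ^ n - 1) * F) (k : ℕ) :
    (modCount n J S k : ℤ) = 1 - F.coeff k := by
  induction k using Nat.strong_induction_on with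
  | _ k ih =>
    have hXF : ((X ^ n - 1) * F).coeff k = (if n ≤ k then F.coeff (k - n) else 0) - F.coeff k := by
      rw [sub_mul, one_mul, coeff_sub, mul_comm, coeff_mul_X_pow']
    have hk := congrArg (coeff · k) h
    simp only [coeff_expPoly_mul, coeff_add, coeff_expPoly, mem_range, hXF] at hk
    rw [modCount_eq hn]
    split_ifs at hk ⊢ with h₁ h₂ h₂
    · omega
    · push_cast; rw [ih (k - n) (by omega)]; omega
    · omega
    · push_cast; omega

end modCount

def SumsInjMod (n : ℕ) (J S : Finset ℕ) : Prop :=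
  Set.InjOn (fun p : ℕ × ℕ => (p.1 + p.2) % n) ↑(J ×ˢ S)

section SumsInjMod

variable {n : ℕ} {J S : Finset ℕ}

lemma sumsInjMod_of_modCount_le_one (h : ∀ k, modCount n J S k ≤ 1) : SumsInjMod n J S := by
  intro p hp p' hp' hpp'
  have hmod : p.1 + p.2 ≡ p'.1 + p'.2 [MOD n] := hpp'
  have hmax : max (p.1 + p.2) (p'.1 + p'.2) ≡ p.1 + p.2 [MOD n] ∧
      max (p.1 + p.2) (p'.1 + p'.2) ≡ p'.1 + p'.2 [MOD n] := by
    rcases max_choice (p.1 + p.2) (p'.1 + p'.2) with hm | hm <;> rw [hm]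
    exacts [⟨rfl, hmod⟩, ⟨hmod.symm, rfl⟩]
  exact card_le_one.1 (h (max (p.1 + p.2) (p'.1 + p'.2)))
    p (mem_filter.2 ⟨hp, le_max_left _ _, hmax.1.symm⟩)
    p' (mem_filter.2 ⟨hp', le_max_right _ _, hmax.2.symm⟩)

lemma modCount_le_one (h : SumsInjMod n J S) (k : ℕ) : modCount n J S k ≤ 1 :=
  card_le_one.2 fun p hp p' hp' => by
    rw [mem_filter] at hp hp'
    exact h (mem_coe.2 hp.1) (mem_coe.2 hp'.1) (hp.2.2.trans hp'.2.2.symm)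

lemma SumsInjMod.residues (h : SumsInjMod n J S) : SumsInjMod n J (residues n S) := by
  rintro ⟨j, _⟩ hp ⟨j', _⟩ hp' hpp'
  simp only [coe_product, Set.mem_prod, mem_coe, CodesConj.residues, mem_image] at hp hp'
  obtain ⟨hj, x, hx, rfl⟩ := hp
  obtain ⟨hj', x', hx', rfl⟩ := hp'
  have := h (x₁ := (j, x)) (x₂ := (j', x')) (by simp [hj, hx]) (by simp [hj', hx'])
    (by simpa only [Nat.add_mod_mod] using hpp')
  obtain ⟨rfl, rfl⟩ := Prod.mk.inj this
  rfl

end SumsInjMod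

lemma exists_disjoint_union_of_expPoly_eq_add {M : Finset ℕ} {A B : ℤ[X]}
    (h : expPoly M = A + B) (hA : ∀ k, 0 ≤ A.coeff k) (hB : ∀ k, 0 ≤ B.coeff k) :
    ∃ M' M'', Disjoint M' M'' ∧ M = M' ∪ M'' ∧ expPoly M' = A ∧ expPoly M'' = B := by
  refine ⟨{k ∈ M | A.coeff k ≠ 0}, {k ∈ M | ¬A.coeff k ≠ 0}, disjoint_filter_filter_not _ _ _,
    (filter_union_filter_not_eq _ _).symm, ?_, ?_⟩ <;>
  · ext k
    have hk := congrArg (coeff · k) h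
    have := hA k
    have := hB k
    simp only [coeff_expPoly, coeff_add, mem_filter] at hk ⊢
    split_ifs at hk ⊢ <;> grind

lemma add_add_one_le_of_expPoly_eq {n : ℕ} {I S : Finset ℕ} {A : ℤ[X]}
    (hI : ∀ i ∈ I, i < n) (hS : ∀ s ∈ S, s < n) (h : expPoly S = expPoly I * (1 + A * (X - 1)))
    {i x : ℕ} (hi : i ∈ I) (hx : A.coeff x ≠ 0) : i + x + 1 ≤ n - 1 := by
  have hIi : (expPoly I).coeff i ≠ 0 := by simp [coeff_expPoly, hi]
  have hdeg : (expPoly I * A * (X - C 1)).natDegree ≤ n - 1 := by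
    rw [C_1, show expPoly I * A * (X - 1) = expPoly S - expPoly I by rw [h]; ring]
    simpa using natDegree_sub_le_of_le (natDegree_expPoly_le hS) (natDegree_expPoly_le hI)
  have hIA : expPoly I * A ≠ 0 :=
    mul_ne_zero (by rintro h0; simp [h0] at hIi) (by rintro h0; simp [h0] at hx)
  rw [natDegree_mul hIA (X_sub_C_ne_zero 1), natDegree_mul (left_ne_zero_of_mul hIA)
    (right_ne_zero_of_mul hIA), natDegree_X_sub_C] at hdeg
  have := le_natDegree_of_ne_zero hIi
  have := le_natDegree_of_ne_zero hx
  omega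

lemma IsKrasner.coeff_nonneg_of_residues {n : ℕ} {I J R M : Finset ℕ} {A : ℤ[X]}
    (hK : IsKrasner n I J) (hn : 0 < n)
    (hRM : expPoly R = expPoly I * (1 + expPoly M * (X - 1)))
    (hRA : expPoly (residues n R) = expPoly I * (1 + A * (X - 1))) (k : ℕ) :
    0 ≤ A.coeff k := by
  have hR := modCount_eq_one_sub_coeff hn (hK.expPoly_mul_eq hRM)
  have hinj : SumsInjMod n J R := sumsInjMod_of_modCount_le_one fun k => by
    have := hR k
    have := coeff_expPoly_nonneg M k
    omega
  have := modCount_eq_one_sub_coeff hn (hK.expPoly_mul_eq hRA) k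
  have := modCount_le_one hinj.residues k
  omega

/-- reduction lemma. -/
theorem statement6 (n : ℕ) (hn : 1 ≤ n) (I J R R' M : Finset ℕ)
    (hK : IsKrasner n I J)
    (hRM : expPoly R = expPoly I * (1 + expPoly M * (Polynomial.X - 1)))
    (hR' : R' = residues n R)
    (q : ℕ) (r lam : Fin q → ℕ)
    (hrinj : Function.Injective r)
    (hrR' : R' = Finset.image r Finset.univ)
    (hRdec : R = Finset.image (fun i => r i + lam i * n) Finset.univ) :
    ∃ M' M'' : Finset ℕ,
      expPoly R' = expPoly I * (1 + expPoly M' * (Polynomial.X - 1)) ∧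
      (∀ i ∈ I, ∀ x ∈ M', i + x + 1 ≤ n - 1) ∧
      Disjoint M' M'' ∧ M = M' ∪ M'' ∧
      expPoly M'' =
        expPoly J * ∑ i : Fin q, ∑ u ∈ Finset.range (lam i), Polynomial.X ^ (r i + u * n) ∧
      expPoly R = expPoly R' + expPoly I * (Polynomial.X - 1) * expPoly M'' := by
  have hR'lt : ∀ s ∈ R', s < n := fun s hs => mod_lt_of_mem_residues hn (hR' ▸ hs)
  set Q := expPoly J * ∑ i : Fin q, ∑ u ∈ range (lam i), (X : ℤ[X]) ^ (r i + u * n)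
  have hRR' : expPoly R = expPoly R' + expPoly I * (X - 1) * Q := by
    rw [hRdec, hrR', expPoly_image_add_mul_eq lam hrinj.injOn
      fun i _ => hR'lt _ (hrR' ▸ mem_image_of_mem r (mem_univ i)), hK.X_pow_sub_one]
    ring
  have hR'P : expPoly R' = expPoly I * (1 + (expPoly M - Q) * (X - 1)) := by
    linear_combination hRM - hRR'
  have hP := hK.coeff_nonneg_of_residues hn hRM (hR' ▸ hR'P)
  have hQ (k : ℕ) : 0 ≤ Q.coeff k := by
    have hQN : Q = (expPolyN J * ∑ i : Fin q, ∑ u ∈ range (lam i), X ^ (r i + u * n)).map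
        (Nat.castRingHom ℤ) := by
      simp [Q, expPoly_eq_map, Polynomial.map_sum]
    rw [hQN, coeff_map]
    exact Int.natCast_nonneg _
  obtain ⟨M', M'', hdisj, hM, hM', hM''⟩ :=
    exists_disjoint_union_of_expPoly_eq_add (sub_add_cancel _ Q).symm hP hQ
  refine ⟨M', M'', hM' ▸ hR'P, fun i hi x hx => ?_, hdisj, hM, hM'', hM'' ▸ hRR'⟩
  exact add_add_one_le_of_expPoly_eq (fun _ => hK.lt_of_mem_left hn) hR'lt (hM' ▸ hR'P) hi
    (by simp [coeff_expPoly, hx])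

end CodesConj
end

section
/- Let X ⊆ A^+ be a finite maximal code and let n be the order of the letter a ∈ A. For any left set a^P of X and any right set a^Q of X, the pair (P,Q) is a factorization of ℤ_n. -/
open Polynomial

namespace FreeMonoid

variable {α : Type*}

theorem length_of_pow (a : α) (k : ℕ) : (of a ^ k).length = k := by
  induction k with
  | zero => rfl
  | succ k ih => rw [pow_succ, length_mul, ih, length_of]

theorem exists_eq_mul_of_mul_eq_mul {u₁ u₂ y v : FreeMonoid α} (h : u₁ * u₂ = y * v)
    (hle : y.length ≤ u₁.length) : ∃ w, u₁ = y * w ∧ v = w * u₂ := by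
  have hpre : y.toList <+: u₁.toList :=
    List.prefix_of_prefix_length_le (l₃ := (y * v).toList) (List.prefix_append _ _)
      (by rw [← h]; exact List.prefix_append _ _) hle
  obtain ⟨t, ht⟩ := hpre
  refine ⟨ofList t, toList.injective ?_, toList.injective ?_⟩
  · simpa using ht.symm
  · have := congrArg toList h
    rw [toList_mul, toList_mul, ← ht, List.append_assoc] at this
    simpa using (List.append_cancel_left this).symm

theorem eq_and_eq_of_mul_eq_mul {u₁ u₂ v₁ v₂ : FreeMonoid α} (h : u₁ * u₂ = v₁ * v₂)
    (hlen : u₁.length = v₁.length) : u₁ = v₁ ∧ u₂ = v₂ := by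
  obtain ⟨w, rfl, rfl⟩ := exists_eq_mul_of_mul_eq_mul h hlen.ge
  have : w = 1 := length_eq_zero.1 (by rw [length_mul] at hlen; omega)
  simp [this]

theorem eq_pow_of_mul_eq_pow_mul {w u x : FreeMonoid α} {a : α} {s : ℕ}
    (h : w * u = of a ^ s * x) (hle : w.length ≤ s) :
    w = of a ^ w.length ∧ u = of a ^ (s - w.length) * x := by
  rw [← Nat.add_sub_cancel' hle, pow_add, mul_assoc] at h
  simpa [Nat.add_sub_cancel_left] using eq_and_eq_of_mul_eq_mul h (length_of_pow a _).symm

end FreeMonoid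

namespace CodesConj

open FreeMonoid

section

variable {A : Type*}

theorem IsCode.eq_of_pow_mem {X : Set (FreeMonoid A)} (hX : IsCode X) {a : A} {k n : ℕ}
    (hk : of a ^ k ∈ X) (hn : of a ^ n ∈ X) : k = n := by
  have h := hX.2 (List.replicate n (of a ^ k)) (List.replicate k (of a ^ n))
    (fun w hw => List.eq_of_mem_replicate hw ▸ hk)
    (fun w hw => List.eq_of_mem_replicate hw ▸ hn)
    (by rw [List.prod_replicate, List.prod_replicate, ← pow_mul, ← pow_mul, Nat.mul_comm])
  simpa using (congrArg List.length h).symm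

theorem subset_starSet (X : Set (FreeMonoid A)) : X ⊆ starSet X := Submonoid.subset_closure

theorem eq_one_or_exists_mul_of_mem_starSet {X : Set (FreeMonoid A)} {w : FreeMonoid A}
    (hw : w ∈ starSet X) : w = 1 ∨ ∃ c ∈ X, ∃ w' ∈ starSet X, w = c * w' := by
  induction (hw : w ∈ Submonoid.closure X) using Submonoid.closure_induction_left with
  | one => exact .inl rfl
  | mul_left c hc w' hw' _ => exact .inr ⟨c, hc, w', hw', rfl⟩

theorem mul_pow_mem_starSet_of_modEq {X : Set (FreeMonoid A)} {y : FreeMonoid A} {a : A}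
    {n i j : ℕ} (hy : y * of a ^ i ∈ starSet X) (ha : of a ^ n ∈ X) (hij : i ≤ j)
    (h : i ≡ j [MOD n]) : y * of a ^ j ∈ starSet X := by
  obtain ⟨k, hk⟩ := (Nat.modEq_iff_dvd' hij).1 h
  rw [show j = i + n * k by omega, pow_add, pow_mul, ← mul_assoc]
  exact Submonoid.mul_mem _ hy (Submonoid.pow_mem _ (subset_starSet X ha) k)

def SplitsAt (X : Set (FreeMonoid A)) (y : FreeMonoid A) (a : A) (i j : ℕ)
    (x : FreeMonoid A) : Prop :=
  y * of a ^ i ∈ starSet X ∧ of a ^ j * x ∈ starSet X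

section Splits

variable {X : Finset (FreeMonoid A)} {a : A} {n : ℕ}

theorem length_le_maxLen {w : FreeMonoid A} (hw : w ∈ X) : w.length ≤ maxLen X :=
  Finset.le_sup (f := fun w => w.toList.length) hw

theorem exists_prefix_mem_starSet_near {u : FreeMonoid A} (hu : u ∈ starSet X) {p : ℕ}
    (hp : p ≤ u.length) :
    ∃ u₁ ∈ starSet X, ∃ u₂ ∈ starSet X,
      u = u₁ * u₂ ∧ p ≤ u₁.length ∧ u₁.length ≤ p + maxLen X := by
  induction (hu : u ∈ Submonoid.closure (↑X : Set (FreeMonoid A)))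
    using Submonoid.closure_induction_left generalizing p with
  | one => exact ⟨1, one_mem _, 1, one_mem _, (one_mul _).symm, hp, by simp [length_one]⟩
  | mul_left c hc w hw ih =>
    rw [length_mul] at hp
    by_cases hpc : p ≤ c.length
    · exact ⟨c, subset_starSet _ hc, w, hw, rfl, hpc, (length_le_maxLen hc).trans (by omega)⟩
    · obtain ⟨v₁, hv₁, v₂, hv₂, rfl, h₁, h₂⟩ := ih (p := p - c.length) (by omega)
      refine ⟨c * v₁, Submonoid.mul_mem _ (subset_starSet _ hc) hv₁, v₂, hv₂, (mul_assoc ..).symm,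
        ?_, ?_⟩ <;> rw [length_mul] <;> omega

variable {y x : FreeMonoid A}

theorem exists_splitsAt_le_maxLen {s : ℕ}
    (h : y * of a ^ s * x ∈ starSet X) (hs : maxLen X ≤ s) :
    ∃ i j, i + j = s ∧ i ≤ maxLen X ∧ SplitsAt X y a i j x := by
  obtain ⟨u₁, hu₁, u₂, hu₂, hu, h₁, h₂⟩ := exists_prefix_mem_starSet_near h (p := y.length)
    (by rw [length_mul, length_mul]; omega)
  rw [mul_assoc] at hu
  obtain ⟨w, rfl, hw⟩ := exists_eq_mul_of_mul_eq_mul hu.symm h₁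
  rw [length_mul] at h₂
  obtain ⟨hw₁, hw₂⟩ := eq_pow_of_mul_eq_pow_mul hw.symm (by omega)
  exact ⟨w.length, s - w.length, by omega, by omega, hw₁ ▸ hu₁, hw₂ ▸ hu₂⟩

theorem SplitsAt.add_order (hX : IsCode (X : Set (FreeMonoid A))) (ha : of a ^ n ∈ X)
    {i j : ℕ} (h : SplitsAt X y a i (n + j) x) (hj : maxLen X ≤ n + j) :
    SplitsAt X y a (i + n) j x := by
  rcases eq_one_or_exists_mul_of_mem_starSet h.2 with h₁ | ⟨c, hc, w, hw, hcw⟩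
  · have := congrArg length h₁
    rw [length_mul, length_of_pow, length_one] at this
    obtain ⟨rfl, rfl⟩ : n = 0 ∧ j = 0 := by omega
    simpa using h
  -- the first factor of `aⁿ⁺ʲx` lies inside the run of `a`s, so it is a power of `a`, hence `aⁿ`
  obtain ⟨hc₁, hw₁⟩ := eq_pow_of_mul_eq_pow_mul hcw.symm ((length_le_maxLen hc).trans hj)
  have hcn : c.length = n := hX.eq_of_pow_mem (hc₁ ▸ hc) ha
  rw [hcn, Nat.add_sub_cancel_left] at hw₁
  refine ⟨?_, hw₁ ▸ hw⟩
  rw [pow_add, ← mul_assoc]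
  exact Submonoid.mul_mem _ h.1 (subset_starSet _ ha)

theorem SplitsAt.add_mul_order (hX : IsCode (X : Set (FreeMonoid A))) (ha : of a ^ n ∈ X)
    {i j k : ℕ} (h : SplitsAt X y a i (n * k + j) x) (hj : maxLen X ≤ j) :
    SplitsAt X y a (i + n * k) j x := by
  induction k generalizing i with
  | zero => simpa using h
  | succ k ih =>
    rw [Nat.mul_succ, add_comm (n * k), add_assoc] at h
    have := ih (h.add_order hX ha (by omega))
    rwa [add_assoc, add_comm n] at this

theorem exists_splitsAt_of_modEq (hX : IsCode (X : Set (FreeMonoid A))) (ha : of a ^ n ∈ X)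
    {s : ℕ} (h : y * of a ^ s * x ∈ starSet X) (hs : maxLen X ≤ s) :
    ∃ r, ∀ i j, i + j = s → maxLen X ≤ i → maxLen X ≤ j → i ≡ r [MOD n] →
      SplitsAt X y a i j x := by
  obtain ⟨i₀, j₀, hs, hi₀, h₀⟩ := exists_splitsAt_le_maxLen h hs
  refine ⟨i₀, fun i j hij hi hj hmod => ?_⟩
  obtain ⟨k, hk⟩ := (Nat.modEq_iff_dvd' (by omega : i₀ ≤ i)).1 hmod.symm
  rw [show j₀ = n * k + j by omega] at h₀
  simpa [show i₀ + n * k = i by omega] using h₀.add_mul_order hX ha hj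

end Splits

section LeftRightSets

variable {X : Finset (FreeMonoid A)} {a : A} {n : ℕ} {P Q : Finset ℕ}

theorem IsLeftSet.lt_of_mem (hP : IsLeftSet X a n P) {p : ℕ} (hp : p ∈ P) : p < n := by
  obtain ⟨y, -, hy⟩ := hP
  exact ((hy p).1 hp).1

theorem exists_add_mod_eq_of_isLeftSet_of_isRightSet (hX : IsCode (X : Set (FreeMonoid A)))
    (ha : of a ^ n ∈ X) (hP : IsLeftSet X a n P) (hQ : IsRightSet X a n Q) {z : ℕ}
    (hz : z < n) : ∃ p ∈ P, ∃ q ∈ Q, (p + q) % n = z := by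
  obtain ⟨y, hy, hyP⟩ := hP
  obtain ⟨⟨x, hxQ⟩, -⟩ := hQ
  set L := maxLen X
  set M := 2 * n * L with hM
  have hnL : n ≤ L := by simpa [length_of_pow] using length_le_maxLen ha
  have hLM : n + L ≤ M := by
    have : 2 * 1 * L ≤ M := Nat.mul_le_mul_right L (by omega)
    omega
  obtain ⟨v, hv⟩ := hy (of a ^ (2 * M + z) * x)
  obtain ⟨r, hr⟩ := exists_splitsAt_of_modEq hX ha (x := x * v) (s := 2 * M + z)
    (by simpa only [mul_assoc] using hv) (by omega)
  set p := r % n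
  set q := (z + n - p) % n
  have hp : p < n := Nat.mod_lt _ (by omega)
  have hq : q < n := Nat.mod_lt _ (by omega)
  have hM0 : (M : ZMod n) = 0 := by simp [hM]
  have hpr : (p : ZMod n) = r := ZMod.natCast_mod r n
  have hqz : (q : ZMod n) = z - p := by
    rw [ZMod.natCast_mod, Nat.cast_sub (by omega), Nat.cast_add, ZMod.natCast_self, add_zero]
  -- `p` and `q` come from the splits of `y a^(2M+z) x v` after `y a^(M+p)` and before `a^(M+q) x v`
  refine ⟨p, (hyP p).2 ⟨hp, (hr (M + p) (M + z - p) (by omega) (by omega) (by omega) ?_).1⟩,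
    q, (hxQ q).2 ⟨hq, v, ?_⟩, ?_⟩
  · rw [← ZMod.natCast_eq_natCast_iff]
    push_cast
    rw [hM0, hpr, zero_add]
  · have hmod : M + z - q ≡ r [MOD n] := by
      rw [← ZMod.natCast_eq_natCast_iff, Nat.cast_sub (by omega)]
      push_cast
      rw [hM0, hqz, hpr]
      ring
    simpa only [mul_assoc, add_comm q] using
      (hr (M + z - q) (q + M) (by omega) (by omega) (by omega) hmod).2
  · rw [← Nat.mod_eq_of_lt hz, ← ZMod.natCast_eq_natCast_iff']
    push_cast
    rw [hqz]
    ring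

theorem not_lt_of_add_modEq_of_isLeftSet_of_isRightSet (ha : of a ^ n ∈ X)
    (hP : IsLeftSet X a n P) (hQ : IsRightSet X a n Q) {p p' q q' : ℕ} (hp : p ∈ P)
    (hp' : p' ∈ P) (hq : q ∈ Q) (hq' : q' ∈ Q) (h : p + q ≡ p' + q' [MOD n]) : ¬q < q' := by
  intro hlt
  have hpn := hP.lt_of_mem hp
  obtain ⟨y, -, hyP⟩ := hP
  -- `y a^(M+p') · a^(q'-q)` is `y a^(M+p)` followed by a power of `aⁿ`, hence in `X^*`
  refine hQ.2 q hq q' hq' hlt ⟨y * of a ^ (2 * n * maxLen X + p'), ((hyP p').1 hp').2, ?_⟩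
  have hmod : p ≡ p' + (q' - q) [MOD n] :=
    Nat.ModEq.add_right_cancel' q (by rwa [add_assoc, Nat.sub_add_cancel hlt.le])
  have hle : p ≤ p' + (q' - q) := by
    rw [← Nat.mod_eq_of_lt hpn, hmod]
    exact Nat.mod_le _ _
  rw [mul_assoc, ← pow_add, add_assoc]
  exact mul_pow_mem_starSet_of_modEq ((hyP p).1 hp).2 ha (by omega) (hmod.add_left _)

end LeftRightSets

end

theorem statement11_general {A : Type*} (X : Finset (FreeMonoid A))
    (hX : IsMaximalCode (↑X : Set (FreeMonoid A))) (a : A) (n : ℕ)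
    (ha : FreeMonoid.of a ^ n ∈ X) (P Q : Finset ℕ)
    (hP : IsLeftSet X a n P) (hQ : IsRightSet X a n Q) :
    IsFactorizationMod n P Q := by
  intro z hz
  obtain ⟨p, hp, q, hq, hpq⟩ := exists_add_mod_eq_of_isLeftSet_of_isRightSet hX.1 ha hP hQ hz
  refine ⟨(p, q), ⟨hp, hq, hpq⟩, ?_⟩
  rintro ⟨p', q'⟩ ⟨hp', hq', hpq'⟩
  have hmod : p' + q' ≡ p + q [MOD n] := hpq'.trans hpq.symm
  obtain rfl : q' = q := le_antisymm
    (not_lt.1 (not_lt_of_add_modEq_of_isLeftSet_of_isRightSet ha hP hQ hp hp' hq hq' hmod.symm))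
    (not_lt.1 (not_lt_of_add_modEq_of_isLeftSet_of_isRightSet ha hP hQ hp' hp hq' hq hmod))
  obtain rfl : p' = p :=
    (Nat.ModEq.add_right_cancel' q' hmod).eq_of_lt_of_lt (hP.lt_of_mem hp') (hP.lt_of_mem hp)
  rfl

/-- For a finite maximal code `X` with `aⁿ ∈ X`, any left set `a^P`
and any right set `a^Q` of `X` give a factorization `(P, Q)` of `ℤ_n`. -/
theorem statement11 {A : Type*} [Fintype A] (X : Finset (FreeMonoid A))
    (hX : IsMaximalCode (↑X : Set (FreeMonoid A))) (a : A) (n : ℕ)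
    (ha : FreeMonoid.of a ^ n ∈ X) (P Q : Finset ℕ)
    (hP : IsLeftSet X a n P) (hQ : IsRightSet X a n Q) :
    IsFactorizationMod n P Q :=
  statement11_general X hX a n ha P Q hP hQ

end CodesConj
end
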